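/- Under the Lipschitz assumptions on f, π, σ and the well-calibrated event, the Wasserstein-1 distance between the hallucinated mean-field flow μ̃_{t,h} (under f̃_{t-1}) and the true flow μ_{t,h} (under f), both started from the same μ_0 and driven by the same policy π_t, satisfies W_1(μ̃_{t,h}, μ_{t,h}) ≤ 2√p β_{t-1} L̄_{t-1}^{h-1} Σ_{i=0}^{h-1} ∫_S ‖σ_{t-1}(s, π_{t,i}(s, μ_{t,i}), μ_{t,i})‖_2 μ_{t,i}(ds), where L̄_{t-1} = 1 + 2(1+L_π)(L_f + 2√p β_{t-1} L_σ). -/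

import Mathlib

open MeasureTheory Finset

/-- Wasserstein-1 distance via the Kantorovich–Rubinstein dual formulation. -/
noncomputable def W1 {S : Type*} [MeasurableSpace S] [PseudoMetricSpace S]
    (μ ν : Measure S) : ℝ :=
  sSup {x | ∃ g : S → ℝ, LipschitzWith 1 g ∧ x = (∫ s, g s ∂μ) - ∫ s, g s ∂ν}

/-- Mean-field pushforward: `Φ(μ, π, g)(ds') = ∫ μ(ds) P[g(s, π(s,μ), μ) + ε ∈ ds']`,
where `ν` is the law of the i.i.d. noise `ε`. -/
noncomputable def MFStep {p : ℕ} {A : Type*}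
    (ν : Measure (EuclideanSpace ℝ (Fin p)))
    (μ : Measure (EuclideanSpace ℝ (Fin p)))
    (π : EuclideanSpace ℝ (Fin p) → Measure (EuclideanSpace ℝ (Fin p)) → A)
    (g : EuclideanSpace ℝ (Fin p) → A → Measure (EuclideanSpace ℝ (Fin p)) →
      EuclideanSpace ℝ (Fin p)) : Measure (EuclideanSpace ℝ (Fin p)) :=
  μ.bind (fun s => Measure.map (fun e => g s (π s μ) μ + e) ν)

/-!
Write `Φ(μ, c)` for the law of `c x + ε` with `x ∼ μ` and `ε ∼ ν`. For an `L`-Lipschitz test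
function `g`, the map `x ↦ E g(x + ε)` is again `L`-Lipschitz, so testing `Φ(μ̃, c̃) - Φ(μ, c)`
against `g` splits into `L ∫ ‖c̃ - c‖ dμ̃` plus `L · Lip(c)` times the distance of `μ̃` and `μ`.
For the optimistic and true closed-loop drifts, calibration and `|η| ≤ 1` give
`‖c̃ - c‖ ≤ 2√p β ‖σ‖ + (1 + L_π)(L_f + 2√p β L_σ) W₁`, and integrating the
`L_σ (1 + L_π)`-Lipschitz function `‖σ‖` against `μ̃` instead of `μ` costs another
`L_σ (1 + L_π) W₁`. Each step therefore multiplies the bound by at most `L̄` and adds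
`2√p β ∫ ‖σ‖ dμ`, a discrete Grönwall recursion.
-/

open NNReal

lemma integral_sub_integral_le_of_integrable_iff {α β : Type*} [MeasurableSpace α]
    [MeasurableSpace β] {μ : Measure α} {ν : Measure β} {f : α → ℝ} {g : β → ℝ} {C : ℝ}
    (hiff : Integrable f μ ↔ Integrable g ν) (h : Integrable g ν → ∫ x, f x ∂μ - ∫ y, g y ∂ν ≤ C)
    (hC : 0 ≤ C) : ∫ x, f x ∂μ - ∫ y, g y ∂ν ≤ C := by
  by_cases hg : Integrable g ν
  · exact h hg
  · rwa [integral_undef hg, integral_undef (hiff.not.2 hg), sub_zero]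

lemma LipschitzWith.norm_comp {α E : Type*} [PseudoEMetricSpace α] [SeminormedAddCommGroup E]
    {K : ℝ≥0} {g : α → E} (hg : LipschitzWith K g) : LipschitzWith K fun x => ‖g x‖ := by
  have := lipschitzWith_one_norm.comp hg
  rwa [one_mul] at this

section Kantorovich

variable {S : Type*} [MeasurableSpace S] [PseudoMetricSpace S]

/-- Dual form of `W₁(μ₁, μ₂) ≤ B`. Without moment assumptions a Lipschitz function need not be
integrable, so the bound also records that `μ₁` and `μ₂` integrate the same Lipschitz functions. -/
def KantorovichBound (μ₁ μ₂ : Measure S) (B : ℝ) : Prop :=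
  ∀ (L : ℝ≥0) (g : S → ℝ), LipschitzWith L g →
    (Integrable g μ₁ ↔ Integrable g μ₂) ∧ ∫ x, g x ∂μ₁ - ∫ x, g x ∂μ₂ ≤ L * B

lemma W1_nonneg (μ₁ μ₂ : Measure S) : 0 ≤ W1 μ₁ μ₂ := by
  by_cases hbdd : BddAbove
      {x | ∃ g : S → ℝ, LipschitzWith 1 g ∧ x = (∫ s, g s ∂μ₁) - ∫ s, g s ∂μ₂}
  · exact le_csSup hbdd ⟨0, (LipschitzWith.const 0).weaken zero_le_one, by simp⟩
  · exact (Real.sSup_of_not_bddAbove hbdd).ge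

-- The dual set is unbounded above, so `sSup` takes its junk value `0`.
lemma W1_zero_left (μ : Measure S) [IsProbabilityMeasure μ] : W1 0 μ = 0 := by
  refine Real.sSup_of_not_bddAbove fun ⟨M, hM⟩ => ?_
  have := hM (a := M + 1) ⟨fun _ => -(M + 1), (LipschitzWith.const _).weaken zero_le_one, by simp⟩
  linarith

namespace KantorovichBound

variable {μ₁ μ₂ : Measure S} {B : ℝ}

lemma refl (μ : Measure S) : KantorovichBound μ μ 0 := fun L g _ => ⟨Iff.rfl, by simp⟩

lemma nonneg (h : KantorovichBound μ₁ μ₂ B) : 0 ≤ B := by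
  simpa using (h 1 0 ((LipschitzWith.const 0).weaken zero_le_one)).2

lemma mono (h : KantorovichBound μ₁ μ₂ B) {B' : ℝ} (hB : B ≤ B') : KantorovichBound μ₁ μ₂ B' :=
  fun L g hg => ⟨(h L g hg).1, (h L g hg).2.trans (by gcongr)⟩

lemma W1_le (h : KantorovichBound μ₁ μ₂ B) : W1 μ₁ μ₂ ≤ B :=
  Real.sSup_le (fun _ ⟨g, hg, hx⟩ => hx ▸ by simpa using (h 1 g hg).2) h.nonneg

end KantorovichBound

lemma W1_self (μ : Measure S) : W1 μ μ = 0 :=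
  (KantorovichBound.refl μ).W1_le.antisymm (W1_nonneg μ μ)

end Kantorovich

namespace KantorovichBound

variable {S T : Type*} [MeasurableSpace S] [PseudoMetricSpace S] [OpensMeasurableSpace S]
  [PseudoMetricSpace T] {μ₁ μ₂ : Measure S} {B : ℝ}

/-- Test-function form of `W₁(c₁_♯ μ₁, c₂_♯ μ₂) ≤ ∫ d(c₁, c₂) dμ₁ + Lip(c₂) · W₁(μ₁, μ₂)`. -/
lemma comp_of_dist_le (h : KantorovichBound μ₁ μ₂ B) {c₁ c₂ : S → T} {Lc : ℝ≥0}
    (hc : LipschitzWith Lc c₂) {Δ : S → ℝ} (hΔ : Integrable Δ μ₁)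
    (hdist : ∀ᵐ x ∂μ₁, dist (c₁ x) (c₂ x) ≤ Δ x) {L : ℝ≥0} {F : T → ℝ} (hF : LipschitzWith L F)
    (hFc₁ : AEStronglyMeasurable (fun x => F (c₁ x)) μ₁) :
    (Integrable (fun x => F (c₁ x)) μ₁ ↔ Integrable (fun x => F (c₂ x)) μ₂) ∧
      ∫ x, F (c₁ x) ∂μ₁ - ∫ x, F (c₂ x) ∂μ₂ ≤ L * (∫ x, Δ x ∂μ₁ + Lc * B) := by
  have hFc : LipschitzWith (L * Lc) (fun x => F (c₂ x)) := hF.comp hc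
  obtain ⟨hiff, hle⟩ := h _ _ hFc
  have hgap : ∀ᵐ x ∂μ₁, ‖F (c₁ x) - F (c₂ x)‖ ≤ L * Δ x := by
    filter_upwards [hdist] with x hx
    exact (hF.dist_le_mul _ _).trans (by gcongr)
  have hgap_int : Integrable (fun x => F (c₁ x) - F (c₂ x)) μ₁ :=
    (hΔ.const_mul L).mono' (hFc₁.sub hFc.continuous.aestronglyMeasurable) hgap
  have hiff₁ : Integrable (fun x => F (c₁ x)) μ₁ ↔ Integrable (fun x => F (c₂ x)) μ₁ := by
    simpa using integrable_add_iff_integrable_left' (g := fun x => F (c₂ x)) hgap_int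
  have hΔ_nonneg : 0 ≤ ∫ x, Δ x ∂μ₁ :=
    integral_nonneg_of_ae (hdist.mono fun x hx => dist_nonneg.trans hx)
  refine ⟨hiff₁.trans hiff, integral_sub_integral_le_of_integrable_iff (hiff₁.trans hiff)
    (fun hint₂ => ?_) (by have := h.nonneg; positivity)⟩
  have hint₁ := hiff.2 hint₂
  calc ∫ x, F (c₁ x) ∂μ₁ - ∫ x, F (c₂ x) ∂μ₂
      = ∫ x, (F (c₁ x) - F (c₂ x)) ∂μ₁ + (∫ x, F (c₂ x) ∂μ₁ - ∫ x, F (c₂ x) ∂μ₂) := by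
        rw [integral_sub (hiff₁.2 hint₁) hint₁]; ring
    _ ≤ ∫ x, L * Δ x ∂μ₁ + (L * Lc : ℝ≥0) * B := by
        refine add_le_add (integral_mono_ae hgap_int (hΔ.const_mul L)
          (hgap.mono fun x hx => (le_abs_self _).trans hx)) hle
    _ = L * (∫ x, Δ x ∂μ₁ + Lc * B) := by rw [integral_const_mul]; push_cast; ring

end KantorovichBound

namespace MeasureTheory.Measure

variable {α β E : Type*} [MeasurableSpace α] [MeasurableSpace β] [NormedAddCommGroup E]
  {μ : Measure α} {κ : α → Measure β}

lemma bind_of_not_aemeasurable (hκ : ¬AEMeasurable κ μ) : μ.bind κ = 0 := by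
  rw [Measure.bind, map_of_not_aemeasurable hκ, join_zero]

lemma isProbabilityMeasure_bind [IsProbabilityMeasure μ] (hκ : AEMeasurable κ μ)
    (h : ∀ x, IsProbabilityMeasure (κ x)) : IsProbabilityMeasure (μ.bind κ) :=
  ⟨by simp [bind_apply MeasurableSet.univ hκ]⟩

noncomputable def _root_.AEMeasurable.kernel (hκ : AEMeasurable κ μ) :
    ProbabilityTheory.Kernel α β :=
  ⟨hκ.mk κ, hκ.measurable_mk⟩

lemma bind_eq_bind_kernel (hκ : AEMeasurable κ μ) : μ.bind κ = μ.bind hκ.kernel :=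
  bind_congr_right hκ.ae_eq_mk

lemma integrable_bind_iff (hκ : AEMeasurable κ μ) {f : β → E}
    (hf : AEStronglyMeasurable f (μ.bind κ)) :
    Integrable f (μ.bind κ) ↔
      (∀ᵐ x ∂μ, Integrable f (κ x)) ∧ Integrable (fun x => ∫ y, ‖f y‖ ∂κ x) μ := by
  rw [bind_eq_bind_kernel hκ] at hf ⊢
  rw [MeasureTheory.Measure.integrable_comp_iff hf]
  refine and_congr (Filter.eventually_congr ?_) (integrable_congr ?_)
  all_goals filter_upwards [hκ.ae_eq_mk] with x hx
  · simp [AEMeasurable.kernel, hx]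
  · simp [AEMeasurable.kernel, hx]

lemma integral_bind [NormedSpace ℝ E] (hκ : AEMeasurable κ μ) {f : β → E}
    (hf : Integrable f (μ.bind κ)) :
    ∫ y, f y ∂(μ.bind κ) = ∫ x, ∫ y, f y ∂κ x ∂μ := by
  rw [bind_eq_bind_kernel hκ, comp_eq_comp_const_apply] at hf ⊢
  rw [ProbabilityTheory.Kernel.integral_comp hf]
  refine integral_congr_ae ?_
  filter_upwards [hκ.ae_eq_mk] with x hx
  simp [AEMeasurable.kernel, hx]

end MeasureTheory.Measure

lemma AEMeasurable.aestronglyMeasurable_integral {α β E : Type*} [MeasurableSpace α]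
    [MeasurableSpace β] [NormedAddCommGroup E] [NormedSpace ℝ E] {μ : Measure α}
    {κ : α → Measure β} (hκ : AEMeasurable κ μ) {f : β → E} (hf : StronglyMeasurable f) :
    AEStronglyMeasurable (fun x => ∫ y, f y ∂κ x) μ := by
  refine ⟨_, hf.integral_kernel (κ := hκ.kernel), ?_⟩
  filter_upwards [hκ.ae_eq_mk] with x hx
  simp [AEMeasurable.kernel, hx]

section Translation

variable {E : Type*} [NormedAddCommGroup E] [MeasurableSpace E] [BorelSpace E]
  {ν : Measure E}

lemma integral_map_add_left {G : Type*} [NormedAddCommGroup G] [NormedSpace ℝ G] (x : E)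
    (f : E → G) : ∫ y, f y ∂(ν.map (x + ·)) = ∫ e, f (x + e) ∂ν :=
  integral_map_equiv (MeasurableEquiv.addLeft x) f

lemma integrable_map_add_left_iff {G : Type*} [NormedAddCommGroup G] (x : E) (f : E → G) :
    Integrable f (ν.map (x + ·)) ↔ Integrable (fun e => f (x + e)) ν :=
  integrable_map_equiv (MeasurableEquiv.addLeft x) f

lemma measurable_map_add_left [SecondCountableTopology E] [SFinite ν] :
    Measurable fun x : E => ν.map (x + ·) := by
  refine Measure.measurable_of_measurable_coe _ fun s hs => ?_
  simp_rw [Measure.map_apply (measurable_const_add _) hs]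
  exact measurable_measure_prodMk_left ((measurable_fst.add measurable_snd) hs)

lemma LipschitzWith.integrable_comp_add_left_iff [IsFiniteMeasure ν] {L : ℝ≥0} {g : E → ℝ}
    (hg : LipschitzWith L g) (x : E) : Integrable (fun e => g (x + e)) ν ↔ Integrable g ν := by
  have hgap : Integrable (fun e => g (x + e) - g e) ν := by
    refine (integrable_const (L * ‖x‖)).mono'
      ((hg.continuous.comp (continuous_const_add x)).sub hg.continuous).aestronglyMeasurable
      (ae_of_all _ fun e => ?_)
    simpa [dist_eq_norm] using hg.dist_le_mul (x + e) e
  simpa using integrable_add_iff_integrable_left' (g := g) hgap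

lemma LipschitzWith.integral_comp_add_left [IsProbabilityMeasure ν] {L : ℝ≥0} {g : E → ℝ}
    (hg : LipschitzWith L g) : LipschitzWith L fun x => ∫ e, g (x + e) ∂ν := by
  refine LipschitzWith.of_dist_le_mul fun x y => ?_
  by_cases hν : Integrable g ν
  · rw [dist_eq_norm, ← integral_sub ((hg.integrable_comp_add_left_iff x).2 hν)
      ((hg.integrable_comp_add_left_iff y).2 hν)]
    simpa using norm_integral_le_of_norm_le_const (μ := ν)
      (f := fun e => g (x + e) - g (y + e)) (ae_of_all _ fun e => by
        simpa [← dist_eq_norm, dist_add_right] using hg.dist_le_mul (x + e) (y + e))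
  · simp [integral_undef (mt (hg.integrable_comp_add_left_iff _).1 hν), mul_nonneg]

lemma integrable_bind_map_add_iff [IsFiniteMeasure ν] {μ : Measure E} {c : E → E}
    (hκ : AEMeasurable (fun x => ν.map (c x + ·)) μ) {L : ℝ≥0} {g : E → ℝ}
    (hg : LipschitzWith L g) (hν : Integrable g ν) :
    Integrable g (μ.bind fun x => ν.map (c x + ·)) ↔
      Integrable (fun x => ∫ e, ‖g (c x + e)‖ ∂ν) μ := by
  rw [Measure.integrable_bind_iff hκ hg.continuous.aestronglyMeasurable]
  simp [integrable_map_add_left_iff, integral_map_add_left,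
    (hg.integrable_comp_add_left_iff _).2 hν]

end Translation

namespace KantorovichBound

variable {E : Type*} [NormedAddCommGroup E] [MeasurableSpace E] [BorelSpace E]
  [SecondCountableTopology E] {ν : Measure E} [IsProbabilityMeasure ν] {μ₁ μ₂ : Measure E}
  [IsProbabilityMeasure μ₁] [IsProbabilityMeasure μ₂] {B : ℝ} {c₁ c₂ : E → E} {Lc : ℝ≥0}
  {Δ : E → ℝ}

/-- Test-function form of `W₁(Φ(μ₁, c₁), Φ(μ₂, c₂)) ≤ ∫ ‖c₁ - c₂‖ dμ₁ + Lip(c₂) · W₁(μ₁, μ₂)`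
for the noisy transitions `Φ(μ, c) = ∫ μ(dx) Law(c x + ε)`. -/
lemma bind_map_add (h : KantorovichBound μ₁ μ₂ B)
    (hκ₁ : AEMeasurable (fun x => ν.map (c₁ x + ·)) μ₁) (hc : LipschitzWith Lc c₂)
    (hΔ : Integrable Δ μ₁) (hdist : ∀ᵐ x ∂μ₁, dist (c₁ x) (c₂ x) ≤ Δ x) :
    KantorovichBound (μ₁.bind fun x => ν.map (c₁ x + ·)) (μ₂.bind fun x => ν.map (c₂ x + ·))
      (∫ x, Δ x ∂μ₁ + Lc * B) := by
  intro L g hg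
  have hκ₂ : AEMeasurable (fun x => ν.map (c₂ x + ·)) μ₂ :=
    (measurable_map_add_left.comp hc.continuous.measurable).aemeasurable
  have hbound : 0 ≤ (L : ℝ) * (∫ x, Δ x ∂μ₁ + Lc * B) := by
    have := integral_nonneg_of_ae (hdist.mono fun x hx => dist_nonneg.trans hx)
    have := h.nonneg
    positivity
  have hmeas {f : E → ℝ} (hf : Continuous f) :
      AEStronglyMeasurable (fun x => ∫ e, f (c₁ x + e) ∂ν) μ₁ := by
    simpa [integral_map_add_left] using
      hκ₁.aestronglyMeasurable_integral hf.measurable.stronglyMeasurable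
  by_cases hν : Integrable g ν
  · have hiff : Integrable g (μ₁.bind fun x => ν.map (c₁ x + ·)) ↔
        Integrable g (μ₂.bind fun x => ν.map (c₂ x + ·)) := by
      rw [integrable_bind_map_add_iff hκ₁ hg hν, integrable_bind_map_add_iff hκ₂ hg hν]
      exact (h.comp_of_dist_le hc hΔ hdist hg.norm_comp.integral_comp_add_left
        (hmeas hg.continuous.norm)).1
    refine ⟨hiff, integral_sub_integral_le_of_integrable_iff hiff (fun hint₂ => ?_) hbound⟩
    rw [Measure.integral_bind hκ₁ (hiff.2 hint₂), Measure.integral_bind hκ₂ hint₂]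
    simpa only [integral_map_add_left] using
      (h.comp_of_dist_le hc hΔ hdist hg.integral_comp_add_left (hmeas hg.continuous)).2
  · have hnot {μ : Measure E} [IsProbabilityMeasure μ] {c : E → E}
        (hκ : AEMeasurable (fun x => ν.map (c x + ·)) μ) :
        ¬Integrable g (μ.bind fun x => ν.map (c x + ·)) := by
      rw [Measure.integrable_bind_iff hκ hg.continuous.aestronglyMeasurable]
      simp [integrable_map_add_left_iff, hg.integrable_comp_add_left_iff, hν,
        IsProbabilityMeasure.ne_zero μ]
    refine ⟨iff_of_false (hnot hκ₁) (hnot hκ₂), ?_⟩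
    rwa [integral_undef (hnot hκ₁), integral_undef (hnot hκ₂), sub_zero]

-- If `x ↦ Law(c₁ x + ε)` is not a.e.-measurable, `Measure.bind` returns the junk value `0`.
lemma bind_map_add_eq_zero_or (h : KantorovichBound μ₁ μ₂ B) (hc : LipschitzWith Lc c₂)
    (hΔ : Integrable Δ μ₁) (hdist : ∀ᵐ x ∂μ₁, dist (c₁ x) (c₂ x) ≤ Δ x) :
    μ₁.bind (fun x => ν.map (c₁ x + ·)) = 0 ∨
      IsProbabilityMeasure (μ₁.bind fun x => ν.map (c₁ x + ·)) ∧
      KantorovichBound (μ₁.bind fun x => ν.map (c₁ x + ·))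
        (μ₂.bind fun x => ν.map (c₂ x + ·)) (∫ x, Δ x ∂μ₁ + Lc * B) := by
  by_cases hκ₁ : AEMeasurable (fun x => ν.map (c₁ x + ·)) μ₁
  · exact .inr ⟨Measure.isProbabilityMeasure_bind hκ₁ fun x =>
      Measure.isProbabilityMeasure_map (measurable_const_add _).aemeasurable,
      h.bind_map_add hκ₁ hc hΔ hdist⟩
  · exact .inl (Measure.bind_of_not_aemeasurable hκ₁)

end KantorovichBound

section ClosedLoop

variable {X A Y S : Type*} [SeminormedAddCommGroup X] [SeminormedAddCommGroup A]
  [SeminormedAddCommGroup Y] [MeasurableSpace S] [PseudoMetricSpace S]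
  {G : X → A → Measure S → Y} {π : X → Measure S → A} {L Lπ : ℝ}

lemma norm_closedLoop_sub_le (hL : 0 ≤ L)
    (hG : ∀ s s' a a' μ μ', ‖G s a μ - G s' a' μ'‖ ≤ L * (‖s - s'‖ + ‖a - a'‖ + W1 μ μ'))
    (hπ : ∀ s s' μ μ', ‖π s μ - π s' μ'‖ ≤ Lπ * (‖s - s'‖ + W1 μ μ')) (s s' : X)
    (μ μ' : Measure S) :
    ‖G s (π s μ) μ - G s' (π s' μ') μ'‖ ≤ L * (1 + Lπ) * (‖s - s'‖ + W1 μ μ') :=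
  calc ‖G s (π s μ) μ - G s' (π s' μ') μ'‖
      ≤ L * (‖s - s'‖ + Lπ * (‖s - s'‖ + W1 μ μ') + W1 μ μ') :=
        (hG _ _ _ _ _ _).trans (by gcongr; exact hπ _ _ _ _)
    _ = L * (1 + Lπ) * (‖s - s'‖ + W1 μ μ') := by ring

lemma lipschitzWith_closedLoop (hL : 0 ≤ L)
    (hG : ∀ s s' a a' μ μ', ‖G s a μ - G s' a' μ'‖ ≤ L * (‖s - s'‖ + ‖a - a'‖ + W1 μ μ'))
    (hπ : ∀ s s' μ μ', ‖π s μ - π s' μ'‖ ≤ Lπ * (‖s - s'‖ + W1 μ μ')) (μ : Measure S) :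
    LipschitzWith (L * (1 + Lπ)).toNNReal fun s => G s (π s μ) μ :=
  .of_dist_le' fun s s' => by
    simpa [dist_eq_norm, W1_self] using norm_closedLoop_sub_le hL hG hπ s s' μ μ

end ClosedLoop

lemma EuclideanSpace.norm_le_norm_of_abs_le {p : ℕ} {x y : EuclideanSpace ℝ (Fin p)}
    (h : ∀ i, |x i| ≤ |y i|) : ‖x‖ ≤ ‖y‖ := by
  simp only [EuclideanSpace.norm_eq, Real.norm_eq_abs]
  exact Real.sqrt_le_sqrt (sum_le_sum fun i _ => pow_le_pow_left₀ (abs_nonneg _) (h i) 2)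

lemma EuclideanSpace.norm_le_sqrt_mul_norm {p : ℕ} (x : EuclideanSpace ℝ (Fin p)) :
    ‖x‖ ≤ √p * ‖x‖ := by
  rcases Nat.eq_zero_or_pos p with rfl | hp
  · simp [Subsingleton.elim x 0]
  · exact le_mul_of_one_le_left (norm_nonneg x) (Real.one_le_sqrt.2 (by exact_mod_cast hp))

lemma norm_optimistic_sub_le {p : ℕ} {β : ℝ} (hβ : 0 ≤ β)
    {f m σ η ftilde : EuclideanSpace ℝ (Fin p)} (hη : ∀ i, η i ∈ Set.Icc (-1 : ℝ) 1)
    (hft : ∀ i, ftilde i = m i + β * σ i * η i) (hcal : ‖m - f‖ ≤ √p * β * ‖σ‖) :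
    ‖ftilde - f‖ ≤ 2 * √p * β * ‖σ‖ := by
  have hopt : ‖ftilde - m‖ ≤ β * ‖σ‖ := by
    rw [← Real.norm_of_nonneg hβ, ← norm_smul]
    refine EuclideanSpace.norm_le_norm_of_abs_le fun i => ?_
    simp only [PiLp.sub_apply, PiLp.smul_apply, hft, smul_eq_mul, add_sub_cancel_left, abs_mul]
    exact mul_le_of_le_one_right (by positivity) (abs_le.2 (hη i))
  calc ‖ftilde - f‖ ≤ ‖ftilde - m‖ + ‖m - f‖ := norm_sub_le_norm_sub_add_norm_sub _ _ _
    _ ≤ β * (√p * ‖σ‖) + √p * β * ‖σ‖ :=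
        add_le_add (hopt.trans (by gcongr; exact EuclideanSpace.norm_le_sqrt_mul_norm σ)) hcal
    _ = 2 * √p * β * ‖σ‖ := by ring

lemma discrete_gronwall_step {c d : ℝ} {b : ℕ → ℝ} (hc : 0 ≤ c) (hd : 0 ≤ d)
    (hb : ∀ i, 0 ≤ b i) (n : ℕ) :
    c * b n + d * (c * (1 + d) ^ (n - 1) * ∑ i ∈ range n, b i) ≤
      c * (1 + d) ^ (n + 1 - 1) * ∑ i ∈ range (n + 1), b i := by
  rcases n with _ | n
  · simp
  have hsum : 0 ≤ ∑ i ∈ range (n + 1), b i := sum_nonneg fun i _ => hb i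
  have hpow : 1 ≤ (1 + d) ^ n * (1 + d) := pow_succ (1 + d) n ▸ one_le_pow₀ (by linarith)
  rw [sum_range_succ _ (n + 1), Nat.add_sub_cancel, Nat.add_sub_cancel, pow_succ]
  nlinarith [mul_nonneg (sub_nonneg.2 hpow) (mul_nonneg hc (hb (n + 1))),
    mul_nonneg (mul_nonneg hc (pow_nonneg (by linarith : (0 : ℝ) ≤ 1 + d) n)) hsum]

section MeanField

variable {p : ℕ} {A : Type*}

local notation "S" => EuclideanSpace ℝ (Fin p)

lemma isProbabilityMeasure_MFStep (ν : Measure S) [IsProbabilityMeasure ν] (μ : Measure S)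
    [IsProbabilityMeasure μ] (π : S → Measure S → A) {g : S → A → Measure S → S}
    (hg : Measurable fun s => g s (π s μ) μ) : IsProbabilityMeasure (MFStep ν μ π g) :=
  Measure.isProbabilityMeasure_bind (measurable_map_add_left.comp hg).aemeasurable fun _ =>
    Measure.isProbabilityMeasure_map (measurable_const_add _).aemeasurable

lemma norm_optimistic_drift_sub_le [NormedAddCommGroup A] {Lf Lσ Lπ β : ℝ} (hLf : 0 ≤ Lf)
    (hLσ : 0 ≤ Lσ) (hβ : 0 ≤ β) {f m σ η ftilde : S → A → Measure S → S} {π : S → Measure S → A}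
    (hη : ∀ s a μ i, η s a μ i ∈ Set.Icc (-1 : ℝ) 1)
    (hft : ∀ s a μ i, ftilde s a μ i = m s a μ i + β * σ s a μ i * η s a μ i)
    (hcal : ∀ s a μ, ‖m s a μ - f s a μ‖ ≤ √p * β * ‖σ s a μ‖)
    (hf : ∀ s s' a a' μ μ', ‖f s a μ - f s' a' μ'‖ ≤ Lf * (‖s - s'‖ + ‖a - a'‖ + W1 μ μ'))
    (hσ : ∀ s s' a a' μ μ', ‖σ s a μ - σ s' a' μ'‖ ≤ Lσ * (‖s - s'‖ + ‖a - a'‖ + W1 μ μ'))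
    (hπ : ∀ s s' μ μ', ‖π s μ - π s' μ'‖ ≤ Lπ * (‖s - s'‖ + W1 μ μ')) (s : S)
    (μ₁ μ₂ : Measure S) :
    ‖ftilde s (π s μ₁) μ₁ - f s (π s μ₂) μ₂‖ ≤
      2 * √p * β * ‖σ s (π s μ₂) μ₂‖ + (1 + Lπ) * (Lf + 2 * √p * β * Lσ) * W1 μ₁ μ₂ := by
  have hopt := norm_optimistic_sub_le hβ (hη s (π s μ₁) μ₁) (hft s (π s μ₁) μ₁)
    (hcal s (π s μ₁) μ₁)
  have hσ₁ : ‖σ s (π s μ₁) μ₁‖ ≤ ‖σ s (π s μ₂) μ₂‖ + Lσ * (1 + Lπ) * W1 μ₁ μ₂ := by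
    have := norm_closedLoop_sub_le hLσ hσ hπ s s μ₁ μ₂
    rw [sub_self, norm_zero, zero_add] at this
    linarith [norm_le_norm_add_norm_sub' (σ s (π s μ₁) μ₁) (σ s (π s μ₂) μ₂)]
  have hf₁ : ‖f s (π s μ₁) μ₁ - f s (π s μ₂) μ₂‖ ≤ Lf * (1 + Lπ) * W1 μ₁ μ₂ := by
    simpa using norm_closedLoop_sub_le hLf hf hπ s s μ₁ μ₂
  calc ‖ftilde s (π s μ₁) μ₁ - f s (π s μ₂) μ₂‖
      ≤ ‖ftilde s (π s μ₁) μ₁ - f s (π s μ₁) μ₁‖ + ‖f s (π s μ₁) μ₁ - f s (π s μ₂) μ₂‖ :=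
        norm_sub_le_norm_sub_add_norm_sub _ _ _
    _ ≤ 2 * √p * β * (‖σ s (π s μ₂) μ₂‖ + Lσ * (1 + Lπ) * W1 μ₁ μ₂) +
        Lf * (1 + Lπ) * W1 μ₁ μ₂ := by gcongr; exact hopt.trans (by gcongr)
    _ = _ := by ring

lemma KantorovichBound.MFStep_optimistic_eq_zero_or [NormedAddCommGroup A] {Lf Lσ Lπ β : ℝ}
    (hLf : 0 ≤ Lf) (hLσ : 0 ≤ Lσ) (hLπ : 0 ≤ Lπ) (hβ : 0 ≤ β)
    {f m σ η ftilde : S → A → Measure S → S} {π : S → Measure S → A}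
    (hη : ∀ s a μ i, η s a μ i ∈ Set.Icc (-1 : ℝ) 1)
    (hft : ∀ s a μ i, ftilde s a μ i = m s a μ i + β * σ s a μ i * η s a μ i)
    (hcal : ∀ s a μ, ‖m s a μ - f s a μ‖ ≤ √p * β * ‖σ s a μ‖)
    (hf : ∀ s s' a a' μ μ', ‖f s a μ - f s' a' μ'‖ ≤ Lf * (‖s - s'‖ + ‖a - a'‖ + W1 μ μ'))
    (hσ : ∀ s s' a a' μ μ', ‖σ s a μ - σ s' a' μ'‖ ≤ Lσ * (‖s - s'‖ + ‖a - a'‖ + W1 μ μ'))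
    (hπ : ∀ s s' μ μ', ‖π s μ - π s' μ'‖ ≤ Lπ * (‖s - s'‖ + W1 μ μ'))
    (ν : Measure S) [IsProbabilityMeasure ν] {μ₁ μ₂ : Measure S} [IsProbabilityMeasure μ₁]
    [IsProbabilityMeasure μ₂] {B : ℝ} (h : KantorovichBound μ₁ μ₂ B)
    (hint : Integrable (fun s => ‖σ s (π s μ₂) μ₂‖) μ₂) :
    MFStep ν μ₁ π ftilde = 0 ∨ IsProbabilityMeasure (MFStep ν μ₁ π ftilde) ∧
      KantorovichBound (MFStep ν μ₁ π ftilde) (MFStep ν μ₂ π f)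
        (2 * √p * β * ∫ s, ‖σ s (π s μ₂) μ₂‖ ∂μ₂ +
          2 * (1 + Lπ) * (Lf + 2 * √p * β * Lσ) * B) := by
  obtain ⟨hσ_iff, hσ_le⟩ := h _ _ (lipschitzWith_closedLoop hLσ hσ hπ μ₂).norm_comp
  rw [Real.coe_toNNReal _ (by positivity)] at hσ_le
  have hW := h.W1_le
  have hΔ : Integrable (fun s => 2 * √p * β * ‖σ s (π s μ₂) μ₂‖ +
      (1 + Lπ) * (Lf + 2 * √p * β * Lσ) * W1 μ₁ μ₂) μ₁ :=
    ((hσ_iff.2 hint).const_mul _).add (integrable_const _)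
  refine (h.bind_map_add_eq_zero_or (ν := ν) (c₁ := fun s => ftilde s (π s μ₁) μ₁)
    (lipschitzWith_closedLoop hLf hf hπ μ₂) hΔ (ae_of_all _ fun s => ?_)).imp_right
    fun ⟨hprob, hK⟩ => ⟨hprob, hK.mono ?_⟩
  · rw [dist_eq_norm]
    exact norm_optimistic_drift_sub_le hLf hLσ hβ hη hft hcal hf hσ hπ s μ₁ μ₂
  · rw [integral_add ((hσ_iff.2 hint).const_mul _) (integrable_const _), integral_const_mul,
      integral_const, Real.coe_toNNReal _ (by positivity)]
    simp only [probReal_univ, one_smul]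
    nlinarith [mul_le_mul_of_nonneg_left hσ_le (by positivity : (0 : ℝ) ≤ 2 * √p * β),
      mul_le_mul_of_nonneg_left hW (by positivity : (0 : ℝ) ≤ (1 + Lπ) * (Lf + 2 * √p * β * Lσ))]

end MeanField

/-- **Wasserstein bound between hallucinated and true mean-field flows.**
Both flows start from the same `μ₀`, are driven by the same policies `π h`, and evolve by
`Φ` under the hallucinated dynamics `f̃` resp. the true dynamics `f`.  Then for every
`h ≥ 1`,
`W₁(μ̃_h, μ_h) ≤ 2√p β L̄^{h-1} ∑_{i<h} ∫ ‖σ(s, π_i(s,μ_i), μ_i)‖₂ μ_i(ds)`,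
with `L̄ = 1 + 2(1+L_π)(L_f + 2√p β L_σ)`. -/
theorem mean_field_flow_wasserstein_bound
    {p : ℕ} {A : Type*} [NormedAddCommGroup A]
    (Lf Lσ Lπ β : ℝ) (hLf : 0 ≤ Lf) (hLσ : 0 ≤ Lσ) (hLπ : 0 ≤ Lπ) (hβ : 0 < β)
    (f m : EuclideanSpace ℝ (Fin p) → A → Measure (EuclideanSpace ℝ (Fin p)) →
      EuclideanSpace ℝ (Fin p))
    (σ η : EuclideanSpace ℝ (Fin p) → A → Measure (EuclideanSpace ℝ (Fin p)) →
      EuclideanSpace ℝ (Fin p))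
    (ftilde : EuclideanSpace ℝ (Fin p) → A → Measure (EuclideanSpace ℝ (Fin p)) →
      EuclideanSpace ℝ (Fin p))
    (π : ℕ → EuclideanSpace ℝ (Fin p) → Measure (EuclideanSpace ℝ (Fin p)) → A)
    -- hallucinated dynamics f̃(z) = m(z) + β diag(σ(z)) η(z) with η ∈ [-1,1]^p
    (hη : ∀ s a μ i, η s a μ i ∈ Set.Icc (-1 : ℝ) 1)
    (hft : ∀ s a μ i, ftilde s a μ i = m s a μ i + β * σ s a μ i * η s a μ i)
    -- calibration (well-calibrated event): ‖m(z) − f(z)‖₂ ≤ √p β ‖σ(z)‖₂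
    (hcal : ∀ s a μ, ‖m s a μ - f s a μ‖ ≤ Real.sqrt p * β * ‖σ s a μ‖)
    -- Lipschitz assumptions
    (hf : ∀ s s' a a' μ μ', ‖f s a μ - f s' a' μ'‖ ≤ Lf * (‖s - s'‖ + ‖a - a'‖ + W1 μ μ'))
    (hσ : ∀ s s' a a' μ μ', ‖σ s a μ - σ s' a' μ'‖ ≤ Lσ * (‖s - s'‖ + ‖a - a'‖ + W1 μ μ'))
    (hπ : ∀ h s s' μ μ', ‖π h s μ - π h s' μ'‖ ≤ Lπ * (‖s - s'‖ + W1 μ μ'))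
    -- noise law, initial distribution, and the two mean-field flows
    (ν : Measure (EuclideanSpace ℝ (Fin p))) [IsProbabilityMeasure ν]
    (μ0 : Measure (EuclideanSpace ℝ (Fin p))) [IsProbabilityMeasure μ0]
    (μtil μ : ℕ → Measure (EuclideanSpace ℝ (Fin p)))
    (hμtil0 : μtil 0 = μ0) (hμ0 : μ 0 = μ0)
    (hμtilstep : ∀ h, μtil (h + 1) = MFStep ν (μtil h) (π h) ftilde)
    (hμstep : ∀ h, μ (h + 1) = MFStep ν (μ h) (π h) f)
    (hint : ∀ i, Integrable (fun s => ‖σ s (π i s (μ i)) (μ i)‖) (μ i)) :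
    ∀ h, 1 ≤ h →
      W1 (μtil h) (μ h)
        ≤ 2 * Real.sqrt p * β
            * (1 + 2 * (1 + Lπ) * (Lf + 2 * Real.sqrt p * β * Lσ)) ^ (h - 1)
            * ∑ i ∈ range h, ∫ s, ‖σ s (π i s (μ i)) (μ i)‖ ∂(μ i) := by
  have hμ : ∀ n, IsProbabilityMeasure (μ n) := by
    intro n
    induction n with
    | zero => exact hμ0 ▸ inferInstance
    | succ n ih =>
      exact hμstep n ▸ isProbabilityMeasure_MFStep ν (μ n) (π n)
        (lipschitzWith_closedLoop hLf hf (hπ n) (μ n)).continuous.measurable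
  have hbound : ∀ n, μtil n = 0 ∨ IsProbabilityMeasure (μtil n) ∧
      KantorovichBound (μtil n) (μ n) (2 * Real.sqrt p * β
        * (1 + 2 * (1 + Lπ) * (Lf + 2 * Real.sqrt p * β * Lσ)) ^ (n - 1)
        * ∑ i ∈ range n, ∫ s, ‖σ s (π i s (μ i)) (μ i)‖ ∂(μ i)) := by
    intro n
    induction n with
    | zero => exact .inr ⟨hμtil0 ▸ inferInstance, by simpa [hμtil0, hμ0] using .refl μ0⟩
    | succ n ih =>
      rcases ih with h0 | ⟨_, hK⟩
      · exact .inl (by rw [hμtilstep, h0, MFStep, Measure.bind_zero_left])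
      · rw [hμtilstep, hμstep]
        exact (hK.MFStep_optimistic_eq_zero_or hLf hLσ hLπ hβ.le hη hft hcal hf hσ (hπ n) ν
          (hint n)).imp_right fun ⟨hprob, hK'⟩ => ⟨hprob, hK'.mono (by
            exact discrete_gronwall_step (b := fun i => ∫ s, ‖σ s (π i s (μ i)) (μ i)‖ ∂(μ i))
              (by positivity) (by positivity) (fun i => integral_nonneg fun _ => norm_nonneg _) n)⟩
  intro h _
  rcases hbound h with h0 | ⟨_, hK⟩
  · rw [h0, W1_zero_left]
    positivity
  · exact hK.W1_le
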